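/- For a finite MDP with target set B̂ ⊆ Ŝ and any memoryless scheduler σ, the reachability probability of B̂ in the induced DTMC P̂^σ lies between the limits of the min and max value iterations: for every ŝ ∈ Ŝ, ⨆ₙ minreach n ŝ ≤ Preach_{P̂^σ} ŝ ≤ ⨆ₙ maxreach n ŝ. -/

import Mathlib

open scoped Classical

/-- Minimum value-iteration sequence for reaching target set `B` in a finite MDP. -/
noncomputable def minreach {S A : Type*} [Fintype S]
    (Act : S → Finset A) (hAct : ∀ s, (Act s).Nonempty)
    (P : S → A → S → ℝ) (B : Set S) : ℕ → S → ℝ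
  | 0, s => if s ∈ B then 1 else 0
  | n + 1, s =>
      if s ∈ B then 1
      else (Act s).inf' (hAct s) fun α => ∑ s' : S, P s α s' * minreach Act hAct P B n s'

/-- Maximum value-iteration sequence for reaching target set `B` in a finite MDP. -/
noncomputable def maxreach {S A : Type*} [Fintype S]
    (Act : S → Finset A) (hAct : ∀ s, (Act s).Nonempty)
    (P : S → A → S → ℝ) (B : Set S) : ℕ → S → ℝ
  | 0, s => if s ∈ B then 1 else 0
  | n + 1, s =>
      if s ∈ B then 1
      else (Act s).sup' (hAct s) fun α => ∑ s' : S, P s α s' * maxreach Act hAct P B n s'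

/-- n-step reachability values of a target set `B` in a DTMC with transition
function `Q`. -/
noncomputable def reachN {S : Type*} [Fintype S] (Q : S → S → ℝ) (B : Set S) :
    ℕ → S → ℝ
  | 0, s => if s ∈ B then 1 else 0
  | n + 1, s => if s ∈ B then 1 else ∑ s' : S, Q s s' * reachN Q B n s'

/-! By induction on `n`, the scheduler's choice `σ s ∈ Act s` is one of the actions over which the
value iterations take their minimum and maximum, so `minreach n ≤ reachN n ≤ maxreach n` pointwise.
As the rows of `P` sum to at most `1`, `maxreach n ≤ 1`; this bounds the two larger sequences, which is what
is needed for the inequalities to pass to suprema in `ℝ`. -/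

section ValueIteration

variable {S A : Type*} [Fintype S] (Act : S → Finset A) (hAct : ∀ s, (Act s).Nonempty)
  (P : S → A → S → ℝ) (B : Set S)

theorem maxreach_le_one (hP : ∀ s α s', 0 ≤ P s α s')
    (hsum : ∀ s, ∀ α ∈ Act s, ∑ s', P s α s' ≤ 1) (n : ℕ) (s : S) :
    maxreach Act hAct P B n s ≤ 1 := by
  induction n generalizing s with
  | zero => simp only [maxreach]; split <;> norm_num
  | succ n ih =>
    simp only [maxreach]
    split
    · exact le_rfl
    · refine Finset.sup'_le _ _ fun α hα => ?_
      calc ∑ s', P s α s' * maxreach Act hAct P B n s'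
          ≤ ∑ s', P s α s' * 1 :=
            Finset.sum_le_sum fun s' _ => mul_le_mul_of_nonneg_left (ih s') (hP s α s')
        _ ≤ 1 := by simpa using hsum s α hα

theorem minreach_le_reachN (hP : ∀ s α s', 0 ≤ P s α s') (σ : S → A) (hσ : ∀ s, σ s ∈ Act s)
    (n : ℕ) (s : S) :
    minreach Act hAct P B n s ≤ reachN (fun a b => P a (σ a) b) B n s := by
  induction n generalizing s with
  | zero => simp only [minreach, reachN, le_refl]
  | succ n ih =>
    simp only [minreach, reachN]
    split
    · exact le_rfl
    · exact (Finset.inf'_le _ (hσ s)).trans <|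
        Finset.sum_le_sum fun s' _ => mul_le_mul_of_nonneg_left (ih s') (hP s (σ s) s')

theorem reachN_le_maxreach (hP : ∀ s α s', 0 ≤ P s α s') (σ : S → A) (hσ : ∀ s, σ s ∈ Act s)
    (n : ℕ) (s : S) :
    reachN (fun a b => P a (σ a) b) B n s ≤ maxreach Act hAct P B n s := by
  induction n generalizing s with
  | zero => simp only [maxreach, reachN, le_refl]
  | succ n ih =>
    simp only [maxreach, reachN]
    split
    · exact le_rfl
    · exact (Finset.sum_le_sum fun s' _ => mul_le_mul_of_nonneg_left (ih s') (hP s (σ s) s')).trans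
        (Finset.le_sup' (fun α => ∑ s', P s α s' * maxreach Act hAct P B n s') (hσ s))

end ValueIteration

theorem scheduler_reach_between_valueIteration_limits_general {S A : Type*}
    [Fintype S]
    (Act : S → Finset A) (hAct : ∀ s, (Act s).Nonempty)
    (P : S → A → S → ℝ)
    (hP : ∀ (s : S) (α : A) (s' : S), 0 ≤ P s α s')
    (hsum : ∀ s : S, ∀ α ∈ Act s, ∑ s' : S, P s α s' = 1)
    (B : Set S)
    (σ : S → A) (hσ : ∀ s : S, σ s ∈ Act s) :
    ∀ s : S,
      (⨆ n : ℕ, minreach Act hAct P B n s) ≤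
          (⨆ n : ℕ, reachN (fun a b => P a (σ a) b) B n s) ∧
      (⨆ n : ℕ, reachN (fun a b => P a (σ a) b) B n s) ≤
          ⨆ n : ℕ, maxreach Act hAct P B n s := by
  intro s
  have max_le_one n := maxreach_le_one Act hAct P B hP (fun s α hα => (hsum s α hα).le) n s
  have reach_le_max n := reachN_le_maxreach Act hAct P B hP σ hσ n s
  have max_bdd : BddAbove (Set.range fun n => maxreach Act hAct P B n s) :=
    ⟨1, Set.forall_mem_range.2 max_le_one⟩
  have reach_bdd : BddAbove (Set.range fun n => reachN (fun a b => P a (σ a) b) B n s) :=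
    ⟨1, Set.forall_mem_range.2 fun n => (reach_le_max n).trans (max_le_one n)⟩
  exact ⟨ciSup_mono reach_bdd (minreach_le_reachN Act hAct P B hP σ hσ · s),
    ciSup_mono max_bdd reach_le_max⟩

/-- For a finite MDP with target set B̂ ⊆ Ŝ and any memoryless
scheduler σ, the reachability probability of B̂ in the induced DTMC
`P̂^σ ŝ ŝ' = P̂ ŝ (σ ŝ) ŝ'` lies between the limits of the min and max value
iterations: `⨆ₙ minreach n ŝ ≤ Preach_{P̂^σ} ŝ ≤ ⨆ₙ maxreach n ŝ`. -/
theorem scheduler_reach_between_valueIteration_limits {S A : Type*}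
    [Fintype S] [Nonempty S] [Fintype A]
    (Act : S → Finset A) (hAct : ∀ s, (Act s).Nonempty)
    (P : S → A → S → ℝ)
    (hP : ∀ (s : S) (α : A) (s' : S), 0 ≤ P s α s')
    (hsum : ∀ s : S, ∀ α ∈ Act s, ∑ s' : S, P s α s' = 1)
    (B : Set S)
    (σ : S → A) (hσ : ∀ s : S, σ s ∈ Act s) :
    ∀ s : S,
      (⨆ n : ℕ, minreach Act hAct P B n s) ≤
          (⨆ n : ℕ, reachN (fun a b => P a (σ a) b) B n s) ∧
      (⨆ n : ℕ, reachN (fun a b => P a (σ a) b) B n s) ≤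
          ⨆ n : ℕ, maxreach Act hAct P B n s :=
  scheduler_reach_between_valueIteration_limits_general Act hAct P hP hsum B σ hσ
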